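/- arXiv:2505.15967 — 3 statements merged into one kernel-verified Lean document; each statement's English description precedes it below -/
import Mathlib

section
/- Let 3/4 ≤ s₁ < 1 and s₁ < s₂ < 1, and let f : ℝ³ → ℂ belong to L¹(ℝ³) ∩ L²(ℝ³) with x ↦ ‖x‖·|f(x)| integrable on ℝ³. Then the function p ↦ 𝓕f(p)/(‖p‖^(2s₁) + ‖p‖^(2s₂)) belongs to L²(ℝ³) if and only if ∫_{ℝ³} f(x) dx = 0. -/
/-!
Write `D(p) = ‖p‖^(2s₁) + ‖p‖^(2s₂)`. Since `𝓕f` is continuous with `𝓕f(0) = ∫ f`, near the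
origin `|𝓕f(p) / D(p)|²` is bounded below by a multiple of `|∫ f|² ‖p‖^(-4s₁)`, which is not
integrable near `0` in `ℝ³` because `4s₁ ≥ 3`; hence `∫ f = 0` is necessary. Conversely, if
`∫ f = 0`, the first moment of `f` gives `|𝓕f(p)| ≤ 2π ‖p‖ ∫ ‖x‖ |f x|`, so the square is
`O(‖p‖^(2-4s₁))` near `0` (integrable as `4s₁ - 2 < 3`), while `|𝓕f| ≤ ‖f‖₁` makes it
`O(‖p‖^(-4s₂))` at infinity (integrable as `4s₂ > 3`).
-/

open MeasureTheory Metric Set Real Module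
open scoped FourierTransform RealInnerProductSpace

lemma Real.norm_fourierChar_sub_one_le (θ : ℝ) : ‖(𝐞 θ : ℂ) - 1‖ ≤ 2 * π * |θ| := by
  have := Real.norm_exp_I_mul_ofReal_sub_one_le (x := 2 * π * θ)
  rwa [Real.norm_eq_abs, abs_mul, abs_of_pos two_pi_pos, mul_comm Complex.I] at this

section Fourier

variable {V F : Type*} [NormedAddCommGroup V] [InnerProductSpace ℝ V] [MeasurableSpace V]
  [BorelSpace V] [FiniteDimensional ℝ V] [NormedAddCommGroup F] [NormedSpace ℂ F]

lemma Real.continuous_fourier_of_integrable {f : V → F} (hf : Integrable f) : Continuous (𝓕 f) :=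
  VectorFourier.fourierIntegral_continuous Real.continuous_fourierChar continuous_inner hf

lemma Real.fourier_apply_zero (f : V → F) : 𝓕 f 0 = ∫ x, f x := by
  simp [Real.fourier_eq]

lemma Real.norm_fourier_sub_integral_le {f : V → F} (hf : Integrable f)
    (hxf : Integrable fun x ↦ ‖x‖ * ‖f x‖) (w : V) :
    ‖𝓕 f w - ∫ x, f x‖ ≤ 2 * π * (∫ x, ‖x‖ * ‖f x‖) * ‖w‖ := by
  have hint : Integrable fun v ↦ 𝐞 (-⟪v, w⟫) • f v := (Real.fourierIntegral_convergent_iff w).2 hf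
  have hpt : ∀ v, ‖𝐞 (-⟪v, w⟫) • f v - f v‖ ≤ 2 * π * ‖w‖ * (‖v‖ * ‖f v‖) := fun v ↦
    calc ‖𝐞 (-⟪v, w⟫) • f v - f v‖ = ‖(𝐞 (-⟪v, w⟫) : ℂ) - 1‖ * ‖f v‖ := by
          rw [← norm_smul, sub_smul, one_smul, Circle.smul_def]
      _ ≤ 2 * π * (‖v‖ * ‖w‖) * ‖f v‖ := by
          gcongr
          calc ‖(𝐞 (-⟪v, w⟫) : ℂ) - 1‖ ≤ 2 * π * |-⟪v, w⟫| := Real.norm_fourierChar_sub_one_le _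
            _ ≤ 2 * π * (‖v‖ * ‖w‖) := by rw [abs_neg]; gcongr; exact abs_real_inner_le_norm v w
      _ = 2 * π * ‖w‖ * (‖v‖ * ‖f v‖) := by ring
  calc ‖𝓕 f w - ∫ x, f x‖ = ‖∫ v, 𝐞 (-⟪v, w⟫) • f v - f v‖ := by
        rw [Real.fourier_eq, integral_sub hint hf]
    _ ≤ ∫ v, 2 * π * ‖w‖ * (‖v‖ * ‖f v‖) :=
        norm_integral_le_of_norm_le (hxf.const_mul _) (.of_forall hpt)
    _ = 2 * π * (∫ x, ‖x‖ * ‖f x‖) * ‖w‖ := by rw [integral_const_mul]; ring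

end Fourier

section PowerIntegrability

variable {E F : Type*} [NormedAddCommGroup E] [NormedSpace ℝ E] [FiniteDimensional ℝ E]
  [MeasurableSpace E] [BorelSpace E] [Nontrivial E] [NormedAddCommGroup F]
  (μ : Measure E) [μ.IsAddHaarMeasure]

lemma integrableOn_ball_norm_rpow_iff {r t : ℝ} (hr : 0 < r) :
    IntegrableOn (fun x : E ↦ ‖x‖ ^ t) (ball 0 r) μ ↔ -(finrank ℝ E : ℝ) < t := by
  have hd : 1 ≤ finrank ℝ E := finrank_pos
  have hpow : EqOn (fun y : ℝ ↦ y ^ (finrank ℝ E - 1) • y ^ t)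
      (fun y ↦ y ^ ((finrank ℝ E : ℝ) - 1 + t)) (Ioo 0 r) := fun y hy ↦ by
    dsimp only
    rw [smul_eq_mul, ← Real.rpow_natCast, ← Real.rpow_add hy.1, Nat.cast_sub hd, Nat.cast_one]
  rw [integrableOn_fun_norm_addHaar μ (f := fun y ↦ y ^ t), integrableOn_congr_fun hpow
    measurableSet_Ioo, intervalIntegral.integrableOn_Ioo_rpow_iff hr]
  constructor <;> intro h <;> linarith

lemma not_integrableOn_ball_of_rpow_le {g : E → ℝ} {c α r : ℝ} (hr : 0 < r) (hc : 0 < c)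
    (hα : finrank ℝ E ≤ α) (hg : ∀ᵐ x ∂μ.restrict (ball 0 r), c * ‖x‖ ^ (-α) ≤ g x) :
    ¬ IntegrableOn g (ball 0 r) μ := fun hint ↦ by
  have hbound : ∀ᵐ x ∂μ.restrict (ball 0 r), ‖‖x‖ ^ (-α)‖ ≤ c⁻¹ * g x :=
    hg.mono fun x hx ↦ by
      rwa [Real.norm_of_nonneg (by positivity), le_inv_mul_iff₀ hc]
  have := (integrableOn_ball_norm_rpow_iff μ hr).1
    ((hint.const_mul c⁻¹).mono' (measurable_norm.pow_const _).aestronglyMeasurable hbound)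
  linarith

lemma integrable_of_norm_le_rpow_of_norm_le_rpow {g : E → F} {A B α β : ℝ}
    (hg : AEStronglyMeasurable g μ) (hα : α < finrank ℝ E) (hβ : finrank ℝ E < β)
    (h_near : ∀ᵐ x ∂μ, ‖x‖ < 1 → ‖g x‖ ≤ A * ‖x‖ ^ (-α))
    (h_far : ∀ᵐ x ∂μ, 1 ≤ ‖x‖ → ‖g x‖ ≤ B * ‖x‖ ^ (-β)) :
    Integrable g μ := by
  rw [← integrableOn_univ, ← union_compl_self (ball (0 : E) 1), integrableOn_union]
  constructor
  · refine integrableOn_ball_of_norm_le_rpow (C := A) finrank_pos hα ?_ hg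
    exact (ae_restrict_iff' measurableSet_ball).2
      (h_near.mono fun x hx hxb ↦ hx (mem_ball_zero_iff.1 hxb))
  · refine ((integrable_one_add_norm hβ).const_mul (|B| * 2 ^ β)).integrableOn.mono' hg.restrict ?_
    refine (ae_restrict_iff' measurableSet_ball.compl).2 (h_far.mono fun x hx hxb ↦ ?_)
    have hx1 : 1 ≤ ‖x‖ := by simpa using hxb
    have hdouble : (2 * ‖x‖) ^ (-β) ≤ (1 + ‖x‖) ^ (-β) :=
      Real.rpow_le_rpow_of_nonpos (by positivity) (by linarith) (by linarith)
    rw [Real.mul_rpow zero_le_two (norm_nonneg x), Real.rpow_neg zero_le_two,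
      inv_mul_le_iff₀ (by positivity)] at hdouble
    calc ‖g x‖ ≤ B * ‖x‖ ^ (-β) := hx hx1
      _ ≤ |B| * ‖x‖ ^ (-β) := by gcongr; exact le_abs_self B
      _ ≤ |B| * (2 ^ β * (1 + ‖x‖) ^ (-β)) := by gcongr
      _ = |B| * 2 ^ β * (1 + ‖x‖) ^ (-β) := by ring

end PowerIntegrability

section Weight

variable {x y s t : ℝ}

lemma rpow_neg_four_mul_eq_inv_sq (hx : 0 < x) : x ^ (-(4 * s)) = ((x ^ (2 * s)) ^ 2)⁻¹ := by
  rw [← Real.rpow_natCast, ← Real.rpow_mul hx.le, ← Real.rpow_neg hx.le]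
  ring_nf

lemma sq_div_rpow_add_rpow_le (hx : 0 < x) :
    (y / (x ^ (2 * s) + x ^ (2 * t))) ^ 2 ≤ y ^ 2 * x ^ (-(4 * s)) := by
  rw [rpow_neg_four_mul_eq_inv_sq hx, ← div_eq_mul_inv, div_pow]
  gcongr
  exact le_add_of_nonneg_right (by positivity)

lemma le_sq_div_rpow_add_rpow (hx : 0 < x) (hx1 : x ≤ 1) (hst : s ≤ t) :
    (y / 2) ^ 2 * x ^ (-(4 * s)) ≤ (y / (x ^ (2 * s) + x ^ (2 * t))) ^ 2 := by
  rw [rpow_neg_four_mul_eq_inv_sq hx, ← div_eq_mul_inv, div_pow, div_pow, div_div, ← mul_pow]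
  gcongr
  linarith [Real.rpow_le_rpow_of_exponent_ge hx hx1 (by linarith : 2 * s ≤ 2 * t)]

lemma sq_norm_div_ofReal_rpow_add_rpow (z : ℂ) (hx : 0 ≤ x) :
    ‖z / ((x ^ (2 * s) + x ^ (2 * t) : ℝ) : ℂ)‖ ^ 2 = (‖z‖ / (x ^ (2 * s) + x ^ (2 * t))) ^ 2 := by
  rw [norm_div, Complex.norm_real, Real.norm_of_nonneg (by positivity)]

end Weight

section FourierMultiplier

variable {E : Type*} [NormedAddCommGroup E] [InnerProductSpace ℝ E] [FiniteDimensional ℝ E]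
  [MeasurableSpace E] [BorelSpace E] {s₁ s₂ : ℝ} {f : E → ℂ}

lemma aestronglyMeasurable_fourier_div (hf : Integrable f) :
    AEStronglyMeasurable fun p : E ↦ 𝓕 f p / ((‖p‖ ^ (2*s₁) + ‖p‖ ^ (2*s₂) : ℝ) : ℂ) :=
  ((Real.continuous_fourier_of_integrable hf).measurable.div (by fun_prop)).aestronglyMeasurable

lemma integral_eq_zero_of_integrable_sq_norm_fourier_div [Nontrivial E]
    (hs₁ : finrank ℝ E ≤ 4 * s₁) (hs₁₂ : s₁ ≤ s₂) (hf : Integrable f)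
    (hint : Integrable fun p : E ↦ ‖𝓕 f p / ((‖p‖ ^ (2*s₁) + ‖p‖ ^ (2*s₂) : ℝ) : ℂ)‖ ^ 2) :
    ∫ x, f x = 0 := by
  by_contra h0
  obtain ⟨ε, hε, hball⟩ : ∃ ε > 0, ∀ p ∈ ball 0 ε, ‖∫ x, f x‖ / 2 < ‖𝓕 f p‖ ∧ p ∈ ball 0 1 := by
    refine Metric.eventually_nhds_iff_ball.1 (Filter.Eventually.and ?_ (ball_mem_nhds 0 one_pos))
    have := (Real.continuous_fourier_of_integrable hf).norm.tendsto 0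
    rw [Real.fourier_apply_zero] at this
    exact this.eventually_const_lt (half_lt_self (norm_pos_iff.2 h0))
  refine not_integrableOn_ball_of_rpow_le volume hε (c := (‖∫ x, f x‖ / 4) ^ 2)
    (by positivity) hs₁ ?_ hint.integrableOn
  filter_upwards [ae_restrict_mem measurableSet_ball, ae_restrict_of_ae (volume.ae_ne 0)]
    with p hp hp0
  obtain ⟨hFp, hp1⟩ := hball p hp
  rw [sq_norm_div_ofReal_rpow_add_rpow _ (norm_nonneg p)]
  calc (‖∫ x, f x‖ / 4) ^ 2 * ‖p‖ ^ (-(4 * s₁))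
      ≤ (‖𝓕 f p‖ / 2) ^ 2 * ‖p‖ ^ (-(4 * s₁)) := by
        gcongr ?_ ^ 2 * _
        linarith
    _ ≤ _ := le_sq_div_rpow_add_rpow (norm_pos_iff.2 hp0) (mem_ball_zero_iff.1 hp1).le hs₁₂

lemma integrable_sq_norm_fourier_div_of_integral_eq_zero [Nontrivial E]
    (hs₁ : 4 * s₁ - 2 < finrank ℝ E) (hs₂ : finrank ℝ E < 4 * s₂) (hf : Integrable f)
    (hxf : Integrable fun x : E ↦ ‖x‖ * ‖f x‖) (h0 : ∫ x, f x = 0) :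
    Integrable fun p : E ↦ ‖𝓕 f p / ((‖p‖ ^ (2*s₁) + ‖p‖ ^ (2*s₂) : ℝ) : ℂ)‖ ^ 2 := by
  refine integrable_of_norm_le_rpow_of_norm_le_rpow volume
    ((aestronglyMeasurable_fourier_div hf).norm.pow 2)
    (A := (2 * π * ∫ x, ‖x‖ * ‖f x‖) ^ 2) (B := (∫ x, ‖f x‖) ^ 2) hs₁ hs₂ ?_ ?_
  · filter_upwards [volume.ae_ne 0] with p hp0 _
    have hp := norm_pos_iff.2 hp0
    have hFp := Real.norm_fourier_sub_integral_le hf hxf p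
    rw [h0, sub_zero] at hFp
    rw [Real.norm_of_nonneg (by positivity), sq_norm_div_ofReal_rpow_add_rpow _ (norm_nonneg p)]
    calc _ ≤ ‖𝓕 f p‖ ^ 2 * ‖p‖ ^ (-(4 * s₁)) := sq_div_rpow_add_rpow_le hp
      _ ≤ (2 * π * (∫ x, ‖x‖ * ‖f x‖) * ‖p‖) ^ 2 * ‖p‖ ^ (-(4 * s₁)) := by gcongr
      _ = _ := by
        rw [mul_pow _ ‖p‖, mul_assoc, ← Real.rpow_natCast ‖p‖, ← Real.rpow_add hp]
        ring_nf
  · filter_upwards [volume.ae_ne 0] with p hp0 _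
    rw [Real.norm_of_nonneg (by positivity), sq_norm_div_ofReal_rpow_add_rpow _ (norm_nonneg p),
      add_comm]
    calc _ ≤ ‖𝓕 f p‖ ^ 2 * ‖p‖ ^ (-(4 * s₂)) := sq_div_rpow_add_rpow_le (norm_pos_iff.2 hp0)
      _ ≤ _ := by
        gcongr
        exact VectorFourier.norm_fourierIntegral_le_integral_norm _ _ _ _ _

end FourierMultiplier

theorem stmt_2_general (s₁ s₂ : ℝ) (hs₁ : 3/4 ≤ s₁) (hs₁' : s₁ < 1)
    (hs₁₂ : s₁ < s₂)
    (f : EuclideanSpace ℝ (Fin 3) → ℂ)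
    (hf1 : Integrable f)
    (hxf : Integrable (fun x : EuclideanSpace ℝ (Fin 3) => ‖x‖ * ‖f x‖)) :
    MemLp (fun p : EuclideanSpace ℝ (Fin 3) =>
        𝓕 f p / ((‖p‖ ^ (2*s₁) + ‖p‖ ^ (2*s₂) : ℝ) : ℂ)) 2 ↔
      ∫ x, f x = 0 := by
  have hdim : (finrank ℝ (EuclideanSpace ℝ (Fin 3)) : ℝ) = 3 := by simp
  rw [memLp_two_iff_integrable_sq_norm (aestronglyMeasurable_fourier_div hf1)]
  exact ⟨integral_eq_zero_of_integrable_sq_norm_fourier_div (by rw [hdim]; linarith) hs₁₂.le hf1,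
    integrable_sq_norm_fourier_div_of_integral_eq_zero (by rw [hdim]; linarith)
      (by rw [hdim]; linarith) hf1 hxf⟩

/-- Lemma 4.1 (b), Fourier side: for `3/4 ≤ s₁ < 1`, `s₁ < s₂ < 1` and
`f ∈ L¹(ℝ³) ∩ L²(ℝ³)` with `x ↦ ‖x‖|f(x)|` integrable, the function
`p ↦ 𝓕f(p)/(‖p‖^(2s₁)+‖p‖^(2s₂))` is in `L²(ℝ³)` iff `∫ f = 0`. -/
theorem stmt_2 (s₁ s₂ : ℝ) (hs₁ : 3/4 ≤ s₁) (hs₁' : s₁ < 1)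
    (hs₁₂ : s₁ < s₂) (hs₂ : s₂ < 1)
    (f : EuclideanSpace ℝ (Fin 3) → ℂ)
    (hf1 : Integrable f) (hf2 : MemLp f 2)
    (hxf : Integrable (fun x : EuclideanSpace ℝ (Fin 3) => ‖x‖ * ‖f x‖)) :
    MemLp (fun p : EuclideanSpace ℝ (Fin 3) =>
        𝓕 f p / ((‖p‖ ^ (2*s₁) + ‖p‖ ^ (2*s₂) : ℝ) : ℂ)) 2 ↔
      ∫ x, f x = 0 :=
  stmt_2_general s₁ s₂ hs₁ hs₁' hs₁₂ f hf1 hxf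
end

section
/- Let 3/4 ≤ s₁ < 1 and s₁ < s₂ < 1, and let c ∈ ℂ. If the function p ↦ c/(‖p‖^(2s₁) + ‖p‖^(2s₂)), restricted to the unit ball {p ∈ ℝ³ : ‖p‖ ≤ 1}, is square-integrable with respect to Lebesgue measure on ℝ³, then c = 0. -/
/-! On the unit ball `‖p‖ ^ (2 * s₂) ≤ ‖p‖ ^ (2 * s₁)`, so the modulus of the function is at least
`‖c‖ * ‖p‖ ^ (-2 * s₁) / 2`. For `c ≠ 0` this puts `‖p‖ ^ (-2 * s₁)` in `L²` of the unit ball,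
i.e. makes `‖p‖ ^ (-4 * s₁)` integrable near the origin of `ℝ³`, which fails as soon as `4 * s₁ ≥ 3`. -/

open MeasureTheory Metric Set
open scoped ENNReal

section NormRpow

variable {E : Type*} [NormedAddCommGroup E] [NormedSpace ℝ E] [FiniteDimensional ℝ E]
  [MeasurableSpace E] [BorelSpace E] [Nontrivial E] (μ : Measure E) [μ.IsAddHaarMeasure]

/-- In polar coordinates this is the integrability of `y ^ (dim E - 1 - α)` near `0`. -/
theorem not_integrableOn_ball_norm_rpow_neg {α r : ℝ} (hr : 0 < r)
    (hα : (Module.finrank ℝ E : ℝ) ≤ α) :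
    ¬ IntegrableOn (fun x : E => ‖x‖ ^ (-α)) (ball 0 r) μ := by
  rw [integrableOn_fun_norm_addHaar μ (f := fun y => y ^ (-α))]
  intro h
  have hpow : IntegrableOn (fun y : ℝ => y ^ ((Module.finrank ℝ E : ℝ) - 1 - α)) (Ioo 0 r) := by
    refine h.congr_fun (fun y hy => ?_) measurableSet_Ioo
    dsimp only
    rw [smul_eq_mul, ← Real.rpow_natCast, ← Real.rpow_add hy.1, Nat.cast_sub Module.finrank_pos]
    push_cast
    ring_nf
  rw [intervalIntegral.integrableOn_Ioo_rpow_iff hr] at hpow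
  linarith

theorem not_memLp_ball_norm_rpow_neg {p : ℝ≥0∞} {α r : ℝ} (hp₀ : p ≠ 0) (hp : p ≠ ⊤)
    (hr : 0 < r) (hα : (Module.finrank ℝ E : ℝ) ≤ p.toReal * α) :
    ¬ MemLp (fun x : E => ‖x‖ ^ (-α)) p (μ.restrict (ball 0 r)) := by
  intro h
  refine not_integrableOn_ball_norm_rpow_neg μ hr hα
    ((h.integrable_norm_rpow hp₀ hp).congr (Filter.Eventually.of_forall fun x => ?_))
  dsimp only
  rw [Real.norm_of_nonneg (by positivity), ← Real.rpow_mul (norm_nonneg x)]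
  ring_nf

end NormRpow

theorem rpow_neg_le_two_div_rpow_add_rpow {x a b : ℝ} (hx₀ : 0 < x) (hx₁ : x ≤ 1) (hab : a ≤ b) :
    x ^ (-a) ≤ 2 / (x ^ a + x ^ b) := by
  have hxa : 0 < x ^ a := Real.rpow_pos_of_pos hx₀ a
  have hxb : x ^ b ≤ x ^ a := Real.rpow_le_rpow_of_exponent_ge hx₀ hx₁ hab
  calc x ^ (-a) = 2 / (2 * x ^ a) := by rw [Real.rpow_neg hx₀.le]; field_simp
    _ ≤ 2 / (x ^ a + x ^ b) := by
      gcongr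
      linarith

theorem stmt_11_general (s₁ s₂ : ℝ) (hs₁ : 3/4 ≤ s₁)
    (hs₁₂ : s₁ < s₂) (c : ℂ)
    (h : MemLp (fun p : EuclideanSpace ℝ (Fin 3) =>
        c / ((‖p‖ ^ (2*s₁) + ‖p‖ ^ (2*s₂) : ℝ) : ℂ)) 2
      (volume.restrict (Metric.closedBall (0 : EuclideanSpace ℝ (Fin 3)) 1))) :
    c = 0 := by
  by_contra hc
  have hbound : ∀ᵐ p ∂volume.restrict (closedBall (0 : EuclideanSpace ℝ (Fin 3)) 1),
      ‖‖p‖ ^ (-(2 * s₁))‖ ≤ 2 / ‖c‖ * ‖c / ((‖p‖ ^ (2*s₁) + ‖p‖ ^ (2*s₂) : ℝ) : ℂ)‖ := by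
    filter_upwards [ae_restrict_mem measurableSet_closedBall] with p hp
    rcases eq_or_ne p 0 with rfl | hp₀
    · rw [norm_zero, Real.zero_rpow (by linarith), norm_zero]
      positivity
    have hnorm : 0 < ‖p‖ := norm_pos_iff.mpr hp₀
    have hsum : 0 < ‖p‖ ^ (2*s₁) + ‖p‖ ^ (2*s₂) := by positivity
    rw [norm_div, Complex.norm_real, Real.norm_of_nonneg hsum.le,
      Real.norm_of_nonneg (by positivity), ← mul_div_assoc,
      div_mul_cancel₀ _ (norm_ne_zero_iff.mpr hc)]
    exact rpow_neg_le_two_div_rpow_add_rpow hnorm (by simpa using hp) (by linarith)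
  have hmemLp := (h.of_le_mul (measurable_norm.pow_const _).aestronglyMeasurable
    hbound).mono_measure (Measure.restrict_mono ball_subset_closedBall le_rfl)
  exact not_memLp_ball_norm_rpow_neg volume two_ne_zero ENNReal.ofNat_ne_top one_pos
    (by norm_num; linarith) hmemLp

/-- For `3/4 ≤ s₁ < 1`, `s₁ < s₂ < 1`, if `p ↦ c/(‖p‖^{2s₁}+‖p‖^{2s₂})` is
square-integrable on the unit ball of `ℝ³`, then `c = 0`. -/
theorem stmt_11 (s₁ s₂ : ℝ) (hs₁ : 3/4 ≤ s₁) (hs₁' : s₁ < 1)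
    (hs₁₂ : s₁ < s₂) (hs₂ : s₂ < 1) (c : ℂ)
    (h : MemLp (fun p : EuclideanSpace ℝ (Fin 3) =>
        c / ((‖p‖ ^ (2*s₁) + ‖p‖ ^ (2*s₂) : ℝ) : ℂ)) 2
      (volume.restrict (Metric.closedBall (0 : EuclideanSpace ℝ (Fin 3)) 1))) :
    c = 0 :=
  stmt_11_general s₁ s₂ hs₁ hs₁₂ c h
end

section
/- Let N ≥ 1, let r > 0, let M ≥ 0, and let g : ℝᴺ → ℝ be twice continuously differentiable with g(0) = 0, with vanishing derivative at the origin (fderiv g at 0 equals 0), and with ‖D²g(z)‖ ≤ M for all z in the closed ball of radius r centered at the origin. Let w : ℝ³ → ℝᴺ be a measurable function belonging to L²(ℝ³, ℝᴺ) such that ‖w(x)‖ ≤ r for almost every x ∈ ℝ³. Then the composition x ↦ g(w(x)) is integrable on ℝ³ and ∫_{ℝ³} |g(w(x))| dx ≤ M·‖w‖_{L²}². -/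
/-!
Since `g` and `Dg` vanish at the origin and `‖D²g‖ ≤ M` on the ball of radius `r`, two applications
of the mean value inequality give `‖Dg(y)‖ ≤ M‖y‖` and then `|g(z)| ≤ M‖z‖²` on that ball. Hence
`|g ∘ w| ≤ M‖w‖²` almost everywhere, and `‖w‖²` is integrable because `w ∈ L²`.
-/

open MeasureTheory Metric

section QuadraticBound

variable {E F : Type*} [NormedAddCommGroup E] [NormedSpace ℝ E]
  [NormedAddCommGroup F] [NormedSpace ℝ F]

theorem norm_le_mul_norm_of_norm_fderiv_le {f : E → F} {R C : ℝ} (hf0 : f 0 = 0)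
    (hf : ∀ x ∈ closedBall (0 : E) R, DifferentiableAt ℝ f x)
    (hC : ∀ x ∈ closedBall (0 : E) R, ‖fderiv ℝ f x‖ ≤ C) {z : E} (hz : ‖z‖ ≤ R) :
    ‖f z‖ ≤ C * ‖z‖ := by
  have hR : 0 ≤ R := (norm_nonneg z).trans hz
  simpa [hf0] using (convex_closedBall (0 : E) R).norm_image_sub_le_of_norm_fderiv_le hf hC
    (mem_closedBall_self hR) (mem_closedBall_zero_iff.mpr hz)

theorem norm_fderiv_fderiv_eq_norm_iteratedFDeriv_two (f : E → F) (x : E) :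
    ‖fderiv ℝ (fderiv ℝ f) x‖ = ‖iteratedFDeriv ℝ 2 f x‖ := by
  rw [← norm_iteratedFDeriv_fderiv (n := 1), ← norm_iteratedFDeriv_fderiv (n := 0),
    norm_iteratedFDeriv_zero]

theorem norm_le_mul_norm_sq_of_norm_iteratedFDeriv_two_le {f : E → F} {r M : ℝ}
    (hf : ContDiff ℝ 2 f) (hf0 : f 0 = 0) (hf0' : fderiv ℝ f 0 = 0)
    (hD2 : ∀ x ∈ closedBall (0 : E) r, ‖iteratedFDeriv ℝ 2 f x‖ ≤ M)
    {z : E} (hz : ‖z‖ ≤ r) : ‖f z‖ ≤ M * ‖z‖ ^ 2 := by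
  have hM : 0 ≤ M :=
    (norm_nonneg _).trans (hD2 0 (mem_closedBall_self ((norm_nonneg z).trans hz)))
  have hDf : ∀ y, ‖y‖ ≤ r → ‖fderiv ℝ f y‖ ≤ M * ‖y‖ := by
    have hf' : ContDiff ℝ 1 (fderiv ℝ f) := hf.fderiv_right (m := 1) le_rfl
    refine fun y hy => norm_le_mul_norm_of_norm_fderiv_le hf0'
      (fun x _ => hf'.differentiable one_ne_zero x) (fun x hx => ?_) hy
    rw [norm_fderiv_fderiv_eq_norm_iteratedFDeriv_two]
    exact hD2 x hx
  calc ‖f z‖ ≤ M * ‖z‖ * ‖z‖ :=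
        norm_le_mul_norm_of_norm_fderiv_le hf0
          (fun x _ => hf.differentiable two_ne_zero x)
          (fun y hy => by
            have hy : ‖y‖ ≤ ‖z‖ := mem_closedBall_zero_iff.mp hy
            exact (hDf y (hy.trans hz)).trans (by gcongr))
          le_rfl
    _ = M * ‖z‖ ^ 2 := by ring

end QuadraticBound

namespace MeasureTheory.MemLp

variable {α E F : Type*} [MeasurableSpace α] {μ : Measure α}
  [NormedAddCommGroup E] [NormedAddCommGroup F] {φ : α → E} {G : α → F} {M : ℝ}

theorem integrable_norm_sq (hφ : MemLp φ 2 μ) : Integrable (fun x => ‖φ x‖ ^ 2) μ :=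
  integrable_norm_pow (p := 2) (by exact_mod_cast hφ) two_ne_zero

theorem integrable_of_norm_le_mul_norm_sq (hφ : MemLp φ 2 μ)
    (hG : AEStronglyMeasurable G μ) (hbound : ∀ᵐ x ∂μ, ‖G x‖ ≤ M * ‖φ x‖ ^ 2) :
    Integrable G μ :=
  (hφ.integrable_norm_sq.const_mul M).mono' hG hbound

theorem integral_norm_le_mul_integral_norm_sq (hφ : MemLp φ 2 μ)
    (hbound : ∀ᵐ x ∂μ, ‖G x‖ ≤ M * ‖φ x‖ ^ 2) :
    ∫ x, ‖G x‖ ∂μ ≤ M * ∫ x, ‖φ x‖ ^ 2 ∂μ := by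
  rw [← integral_const_mul]
  exact integral_mono_of_nonneg (.of_forall fun _ => norm_nonneg _)
    (hφ.integrable_norm_sq.const_mul M) hbound

end MeasureTheory.MemLp

theorem stmt_13_general (N : ℕ) (r M : ℝ)
    (g : EuclideanSpace ℝ (Fin N) → ℝ)
    (hg : ContDiff ℝ 2 g) (hg0 : g 0 = 0) (hg0' : fderiv ℝ g 0 = 0)
    (hD2 : ∀ z ∈ Metric.closedBall (0 : EuclideanSpace ℝ (Fin N)) r,
      ‖iteratedFDeriv ℝ 2 g z‖ ≤ M)
    (w : EuclideanSpace ℝ (Fin 3) → EuclideanSpace ℝ (Fin N))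
    (hw2 : MemLp w 2)
    (hwr : ∀ᵐ x : EuclideanSpace ℝ (Fin 3), ‖w x‖ ≤ r) :
    Integrable (fun x : EuclideanSpace ℝ (Fin 3) => g (w x)) ∧
    ∫ x : EuclideanSpace ℝ (Fin 3), |g (w x)| ≤ M * ∫ x, ‖w x‖ ^ 2 := by
  have hbound : ∀ᵐ x, ‖g (w x)‖ ≤ M * ‖w x‖ ^ 2 :=
    hwr.mono fun x hx => norm_le_mul_norm_sq_of_norm_iteratedFDeriv_two_le hg hg0 hg0' hD2 hx
  exact ⟨hw2.integrable_of_norm_le_mul_norm_sq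
      (hg.continuous.comp_aestronglyMeasurable hw2.aestronglyMeasurable) hbound,
    hw2.integral_norm_le_mul_integral_norm_sq hbound⟩

/-- The `L¹` bound for the nonlinear term: if `g ∈ C²(ℝᴺ)` with `g(0) = 0`,
`∇g(0) = 0` and `‖D²g‖ ≤ M` on the closed ball of radius `r`, and
`w ∈ L²(ℝ³, ℝᴺ)` with `‖w(x)‖ ≤ r` a.e., then `x ↦ g(w(x))` is integrable and
`∫ |g(w(x))| dx ≤ M ∫ ‖w(x)‖² dx`. -/
theorem stmt_13 (N : ℕ) (hN : 1 ≤ N) (r M : ℝ) (hr : 0 < r) (hM : 0 ≤ M)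
    (g : EuclideanSpace ℝ (Fin N) → ℝ)
    (hg : ContDiff ℝ 2 g) (hg0 : g 0 = 0) (hg0' : fderiv ℝ g 0 = 0)
    (hD2 : ∀ z ∈ Metric.closedBall (0 : EuclideanSpace ℝ (Fin N)) r,
      ‖iteratedFDeriv ℝ 2 g z‖ ≤ M)
    (w : EuclideanSpace ℝ (Fin 3) → EuclideanSpace ℝ (Fin N))
    (hwm : Measurable w) (hw2 : MemLp w 2)
    (hwr : ∀ᵐ x : EuclideanSpace ℝ (Fin 3), ‖w x‖ ≤ r) :
    Integrable (fun x : EuclideanSpace ℝ (Fin 3) => g (w x)) ∧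
    ∫ x : EuclideanSpace ℝ (Fin 3), |g (w x)| ≤ M * ∫ x, ‖w x‖ ^ 2 :=
  stmt_13_general N r M g hg hg0 hg0' hD2 w hw2 hwr
end
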